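/- Let w be a finite square-free word with restriction sequence r_0 ≺ r_1 ≺ ⋯ ≺ r_{m−1} (all square-free words of the form w[:j]·k with 0 ≤ j < |w| and 0 ≤ k < w[j], in lexicographic order), let v_i = max(w)+i+1, and define x_0 = v_0 and x_{i+1} = v_{i+1} · x_i · r_i · x_i. Then for every 0 ≤ i ≤ m, x_i = V_i · φ_w(R_i[:−1]), where V_i = v_i v_{i−1} ⋯ v_1 v_0, φ_w is the morphism sending letter k to r_k·V_k, and R_i := ρ^i(0). -/

import Mathlib

def rho (w : List ℕ) : List ℕ := w.flatMap (fun n => [0, n + 1])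

def R (n : ℕ) : List ℕ := rho^[n] [0]

def SqFree (w : List ℕ) : Prop := ∀ y : List ℕ, y ≠ [] → ¬ (y ++ y) <:+: w

/-- The maximum letter of a finite word. -/
def maxL (w : List ℕ) : ℕ := w.foldr max 0

/-- v is a restriction of w: v = w[:j]·k with j < |w| and k < w[j]. -/
def Restriction (w v : List ℕ) : Prop :=
  ∃ j, j < w.length ∧ ∃ k, k < w.getD j 0 ∧ v = w.take j ++ [k]

/-- V_i = v_i v_{i−1} ⋯ v_1 v_0 where v_j = max(w) + j + 1. -/
def Vw (w : List ℕ) (i : ℕ) : List ℕ :=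
  (List.range (i + 1)).reverse.map (fun j => maxL w + j + 1)

/-!
The word `R (i+1) = ρ(R i)` ends in the letter `i+1`, and removing it leaves
`R i · R i[:−1] = R i[:−1] · i · R i[:−1]`. Applying `φ_w` (letter `k ↦ r_k V_k`) turns this
into `φ_w(R i[:−1]) · r_i V_i · φ_w(R i[:−1])`, and prefixing `V_{i+1} = v_{i+1} V_i` gives
exactly the recursion `x_{i+1} = v_{i+1} x_i r_i x_i`.
-/

lemma rho_append (a b : List ℕ) : rho (a ++ b) = rho a ++ rho b :=
  List.flatMap_append

lemma rho_singleton (n : ℕ) : rho [n] = [0, n + 1] := rfl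

lemma R_zero : R 0 = [0] := rfl

lemma R_succ (i : ℕ) : R (i + 1) = rho (R i) :=
  Function.iterate_succ_apply' rho i [0]

lemma R_eq_dropLast_append (i : ℕ) : R i = (R i).dropLast ++ [i] := by
  induction i with
  | zero => rfl
  | succ i ih =>
    rw [R_succ, ih, rho_append, rho_singleton, List.dropLast_append_of_ne_nil (by simp)]
    simp

lemma dropLast_R_succ_eq_rho (i : ℕ) : (R (i + 1)).dropLast = rho (R i).dropLast ++ [0] := by
  conv_lhs => rw [R_succ, R_eq_dropLast_append i, rho_append, rho_singleton]
  simp [List.dropLast_append_of_ne_nil]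

lemma dropLast_R_succ (i : ℕ) : (R (i + 1)).dropLast = R i ++ (R i).dropLast := by
  induction i with
  | zero => rfl
  | succ i ih =>
    rw [dropLast_R_succ_eq_rho, ih, rho_append, List.append_assoc, ← dropLast_R_succ_eq_rho,
      ih, R_succ]

lemma dropLast_R_succ_eq_cons (i : ℕ) :
    (R (i + 1)).dropLast = (R i).dropLast ++ i :: (R i).dropLast := by
  rw [dropLast_R_succ]
  nth_rewrite 1 [R_eq_dropLast_append i]
  simp

lemma Vw_succ (w : List ℕ) (i : ℕ) : Vw w (i + 1) = (maxL w + (i + 1) + 1) :: Vw w i := by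
  simp [Vw, List.range_succ]

theorem x_structure_general (w : List ℕ) (m : ℕ) (r : ℕ → List ℕ)
    (x : ℕ → List ℕ)
    (hx0 : x 0 = [maxL w + 1])
    (hxs : ∀ i, x (i + 1) = (maxL w + i + 2) :: (x i ++ r i ++ x i)) :
    ∀ i ≤ m, x i = Vw w i ++ (R i).dropLast.flatMap (fun k => r k ++ Vw w k) := by
  suffices ∀ i, x i = Vw w i ++ (R i).dropLast.flatMap (fun k => r k ++ Vw w k) from
    fun i _ => this i
  intro i
  induction i with
  | zero => simp [hx0, R_zero, Vw]
  | succ i ih =>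
    rw [hxs, ih, dropLast_R_succ_eq_cons, Vw_succ]
    simp only [List.flatMap_append, List.flatMap_cons, List.append_assoc, List.cons_append]
    rfl

/-- Lemma 7.1: with r₀ ≺ ⋯ ≺ r_{m−1} the restriction sequence of the square-free
word w, v_i = max(w)+i+1, x₀ = v₀ and x_{i+1} = v_{i+1}·x_i·r_i·x_i, we have
x_i = V_i · φ_w(R_i[:−1]) for 0 ≤ i ≤ m, where φ_w(k) = r_k·V_k. -/
theorem x_structure (w : List ℕ) (hw : SqFree w) (m : ℕ) (r : ℕ → List ℕ)
    (hr1 : ∀ i < m, Restriction w (r i) ∧ SqFree (r i))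
    (hr2 : ∀ v : List ℕ, Restriction w v → SqFree v → ∃ i < m, r i = v)
    (hr3 : ∀ i j, i < j → j < m → List.Lex (· < ·) (r i) (r j))
    (x : ℕ → List ℕ)
    (hx0 : x 0 = [maxL w + 1])
    (hxs : ∀ i, x (i + 1) = (maxL w + i + 2) :: (x i ++ r i ++ x i)) :
    ∀ i ≤ m, x i = Vw w i ++ (R i).dropLast.flatMap (fun k => r k ++ Vw w k) :=
  x_structure_general w m r x hx0 hxs
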